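/- Let M ≥ 1, let R ∈ ℂ^{M×M} be a positive definite Hermitian matrix with diagonal part D and strictly lower-triangular part L, and let ω be a real number with 0 < ω < 2. Then the matrix D + ωL is invertible and every eigenvalue λ of the successive over-relaxation (SOR) iteration matrix T^ω = (D + ωL)⁻¹·((ω−1)·D + ω·Lᴴ) satisfies |λ| < 1 (i.e., the spectral radius of T^ω is strictly less than 1). -/

import Mathlib

open Matrix
open scoped ComplexOrder

/-!
Write `α = vᴴDv > 0` and `β = vᴴLv` for an eigenvector `v` of `T^ω` with eigenvalue `λ`. The
eigen-equation `((ω-1)D + ωLᴴ)v = λ(D + ωL)v`, paired with `v`, gives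
`λ (α + ωβ) = (ω-1)α + ω β̄`, and a direct computation shows
`|α + ωβ|² - |(ω-1)α + ωβ̄|² = ω(2-ω) α (α + 2 Re β)`. Since `α + 2 Re β = vᴴRv > 0`, this is
positive for `0 < ω < 2`, whence `|λ| < 1`.
-/

theorem Complex.norm_sub_one_mul_add_mul_star_lt_norm_add_mul {α β : ℂ} {ω : ℝ}
    (hα : 0 < α) (hαβ : 0 < α + β + star β) (hω0 : 0 < ω) (hω2 : ω < 2) :
    ‖((ω : ℂ) - 1) * α + ω * star β‖ < ‖α + ω * β‖ := by
  obtain ⟨hα_re, hα_im⟩ := Complex.pos_iff.1 hα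
  have hsum : 0 < α.re + 2 * β.re := by
    have := (Complex.pos_iff.1 hαβ).1
    simp only [Complex.add_re, Complex.star_def, Complex.conj_re] at this
    linarith
  have key : Complex.normSq (α + ω * β) - Complex.normSq ((ω - 1) * α + ω * star β)
      = ω * (2 - ω) * α.re * (α.re + 2 * β.re) := by
    simp only [Complex.normSq_apply, Complex.add_re, Complex.add_im, Complex.mul_re,
      Complex.mul_im, Complex.sub_re, Complex.sub_im, Complex.ofReal_re, Complex.ofReal_im,
      Complex.one_re, Complex.one_im, Complex.star_def, Complex.conj_re, Complex.conj_im,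
      ← hα_im]
    ring
  have hpos : 0 < ω * (2 - ω) * α.re * (α.re + 2 * β.re) := by
    have : 0 < 2 - ω := by linarith
    positivity
  rw [← sq_lt_sq₀ (norm_nonneg _) (norm_nonneg _), Complex.sq_norm, Complex.sq_norm]
  linarith

namespace Matrix

theorem star_dotProduct_conjTranspose_mulVec {m α : Type*} [Fintype m] [CommSemiring α]
    [StarRing α] (A : Matrix m m α) (v : m → α) :
    star v ⬝ᵥ (Aᴴ *ᵥ v) = star (star v ⬝ᵥ (A *ᵥ v)) := by
  rw [← star_dotProduct_star, star_star, star_mulVec, dotProduct_mulVec]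

variable {n α : Type*} [LinearOrder n]

def strictLowerPart [Zero α] (A : Matrix n n α) : Matrix n n α :=
  of fun i j => if j < i then A i j else 0

theorem isUnit_diagonal_diag_add_smul_strictLowerPart [Fintype n] [CommRing α]
    (A : Matrix n n α) (hA : ∀ i, IsUnit (A i i)) (c : α) :
    IsUnit (diagonal A.diag + c • A.strictLowerPart) := by
  have hlower : (diagonal A.diag + c • A.strictLowerPart).IsLowerTriangular := by
    intro i j hij
    have hij : i < j := hij
    simp [strictLowerPart, diagonal_apply_ne _ hij.ne, not_lt.2 hij.le]
  rw [isUnit_iff_isUnit_det, det_of_isLowerTriangular _ hlower]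
  simpa [strictLowerPart] using hA

theorem IsHermitian.diagonal_diag_add_strictLowerPart_add_conjTranspose [AddMonoid α]
    [StarAddMonoid α] {A : Matrix n n α} (hA : A.IsHermitian) :
    diagonal A.diag + A.strictLowerPart + A.strictLowerPartᴴ = A := by
  ext i j
  rcases lt_trichotomy i j with h | rfl | h
  · simp [strictLowerPart, diagonal_apply_ne _ h.ne, not_lt.2 h.le, h, hA.apply]
  · simp [strictLowerPart]
  · simp [strictLowerPart, diagonal_apply_ne _ h.ne', not_lt.2 h.le, h]

theorem PosDef.norm_lt_one_of_sor_eigenpair [Fintype n] {R : Matrix n n ℂ} (hR : R.PosDef)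
    {ω : ℝ} (hω0 : 0 < ω) (hω2 : ω < 2) {lam : ℂ} {v : n → ℂ} (hv : v ≠ 0)
    (h : (((ω : ℂ) - 1) • diagonal R.diag + (ω : ℂ) • R.strictLowerPartᴴ) *ᵥ v
      = lam • ((diagonal R.diag + (ω : ℂ) • R.strictLowerPart) *ᵥ v)) :
    ‖lam‖ < 1 := by
  set D := diagonal R.diag
  set L := R.strictLowerPart
  have hα : 0 < star v ⬝ᵥ (D *ᵥ v) :=
    (PosDef.diagonal fun _ => hR.diag_pos).dotProduct_mulVec_pos hv
  have hαβ : 0 < star v ⬝ᵥ (D *ᵥ v) + star v ⬝ᵥ (L *ᵥ v)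
      + star (star v ⬝ᵥ (L *ᵥ v)) := by
    have := hR.dotProduct_mulVec_pos hv
    rwa [← hR.1.diagonal_diag_add_strictLowerPart_add_conjTranspose, add_mulVec, add_mulVec,
      dotProduct_add, dotProduct_add, star_dotProduct_conjTranspose_mulVec] at this
  have heq := congrArg (star v ⬝ᵥ ·) h
  simp only [add_mulVec, smul_mulVec, dotProduct_add, dotProduct_smul, smul_add,
    star_dotProduct_conjTranspose_mulVec, smul_eq_mul] at heq
  have hlt := Complex.norm_sub_one_mul_add_mul_star_lt_norm_add_mul hα hαβ hω0 hω2
  rw [heq, ← mul_add, norm_mul] at hlt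
  exact (mul_lt_iff_lt_one_left (lt_of_le_of_lt (by positivity) hlt)).1 hlt

end Matrix

theorem sor_spectral_radius_lt_one_general
    (M : ℕ) (R : Matrix (Fin M) (Fin M) ℂ) (hR : R.PosDef)
    (D L : Matrix (Fin M) (Fin M) ℂ)
    (hD : D = Matrix.diagonal (fun i => R i i))
    (hL : ∀ i j, L i j = if j < i then R i j else 0)
    (ω : ℝ) (hω0 : 0 < ω) (hω2 : ω < 2) :
    IsUnit (D + (ω : ℂ) • L) ∧
      ∀ (lam : ℂ) (v : Fin M → ℂ), v ≠ 0 →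
        ((D + (ω : ℂ) • L)⁻¹ * (((ω : ℂ) - 1) • D + (ω : ℂ) • Lᴴ)) *ᵥ v = lam • v →
          ‖lam‖ < 1 := by
  obtain rfl : D = diagonal R.diag := hD
  obtain rfl : L = R.strictLowerPart := Matrix.ext hL
  have hU := isUnit_diagonal_diag_add_smul_strictLowerPart R (fun _ => hR.diag_pos.ne'.isUnit) ω
  refine ⟨hU, fun lam v hv hev => hR.norm_lt_one_of_sor_eigenpair hω0 hω2 hv ?_⟩
  set U := diagonal R.diag + (ω : ℂ) • R.strictLowerPart
  calc _ = U *ᵥ ((U⁻¹ * _) *ᵥ v) := by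
        rw [mulVec_mulVec, mul_nonsing_inv_cancel_left _ _ ((isUnit_iff_isUnit_det U).1 hU)]
    _ = lam • (U *ᵥ v) := by rw [hev, mulVec_smul]

/-- SOR convergence for positive definite Hermitian matrices and `0 < ω < 2`:
`D + ωL` is invertible and every eigenvalue of
`(D + ωL)⁻¹ * ((ω−1)D + ωLᴴ)` has absolute value `< 1`. -/
theorem sor_spectral_radius_lt_one
    (M : ℕ) (hM : 1 ≤ M) (R : Matrix (Fin M) (Fin M) ℂ) (hR : R.PosDef)
    (D L : Matrix (Fin M) (Fin M) ℂ)
    (hD : D = Matrix.diagonal (fun i => R i i))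
    (hL : ∀ i j, L i j = if j < i then R i j else 0)
    (ω : ℝ) (hω0 : 0 < ω) (hω2 : ω < 2) :
    IsUnit (D + (ω : ℂ) • L) ∧
      ∀ (lam : ℂ) (v : Fin M → ℂ), v ≠ 0 →
        ((D + (ω : ℂ) • L)⁻¹ * (((ω : ℂ) - 1) • D + (ω : ℂ) • Lᴴ)) *ᵥ v = lam • v →
          ‖lam‖ < 1 :=
  sor_spectral_radius_lt_one_general M R hR D L hD hL ω hω0 hω2
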